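/- The necessitation rule is derivable in λA: let •Γ₁ ∪ Γ₂ be a well-formed typing context. If Γ₁ ⊢ M : A is derivable in the typing system λA, then •Γ₁ ∪ Γ₂ ⊢ M : •A is also derivable in λA. -/
import Mathlib


namespace LambdaA

/-! ### Type expressions (de Bruijn representation for `μ`-binders) -/

inductive Ty : Type
  | var : ℕ → Ty
  | arrow : Ty → Ty → Ty
  | box : Ty → Ty
  | mu : Ty → Ty
  deriving DecidableEq

namespace Ty

def rename : (ℕ → ℕ) → Ty → Ty
  | f, var n => var (f n)
  | f, arrow A B => arrow (rename f A) (rename f B)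
  | f, box A => box (rename f A)
  | f, mu A => mu (rename (fun n => match n with | 0 => 0 | Nat.succ m => f m + 1) A)

def shiftUp : Ty → Ty := rename Nat.succ

def subst : (ℕ → Ty) → Ty → Ty
  | σ, var n => σ n
  | σ, arrow A B => arrow (subst σ A) (subst σ B)
  | σ, box A => box (subst σ A)
  | σ, mu A => mu (subst (fun n => match n with | 0 => var 0 | Nat.succ m => shiftUp (σ m)) A)

end Ty

/-- `openT A B`: instantiate the outermost bound variable (index `0`) of the body `A` by `B`. -/
def openT (A B : Ty) : Ty :=
  Ty.subst (fun n => match n with | 0 => B | Nat.succ m => Ty.var m) A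

/-- `substFree A X B` is the capture-avoiding substitution `A[B/X]` for the free variable `X`. -/
def substFree (A : Ty) (X : ℕ) (B : Ty) : Ty :=
  Ty.subst (fun n => if n = X then B else Ty.var n) A

/-- The unfolding `μX.A ↦ A[μX.A/X]` of a recursive type. -/
def unfoldMu (A : Ty) : Ty := openT A (Ty.mu A)

/-- Free occurrence of a type variable in a type expression. -/
def freeInTy : ℕ → Ty → Prop
  | X, .var n => n = X
  | X, .arrow A B => freeInTy X A ∨ freeInTy X B
  | X, .box A => freeInTy X A
  | X, .mu A => freeInTy (X + 1) A

/-- Auxiliary ⊤-variant test.  `tvAux A d t` scans the tail of `A`, where `d` is the number of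
`μ`-binders passed so far and `t` is the number of (outermost) such binders inside which a `•`
has already been encountered.  A variable qualifies iff it is bound by one of the `μ`-binders
and at least one `•` occurs inside that binder. -/
def tvAux : Ty → ℕ → ℕ → Bool
  | .var j, d, t => decide (d - t ≤ j ∧ j < d)
  | .box A, d, _ => tvAux A d d
  | .mu A, d, t => tvAux A (d + 1) t
  | .arrow _ B, d, t => tvAux B d t

/-- `A` is a ⊤-variant. -/
def IsTV (A : Ty) : Prop := tvAux A 0 0 = true

/-- `Proper A X` : the type expression `A` is proper in the (free) variable `X`. -/
def Proper : Ty → ℕ → Prop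
  | .var n, X => n ≠ X
  | .box _, _ => True
  | .arrow A B, X => (Proper A X ∧ Proper B X) ∨ IsTV B
  | .mu A, X => Proper A (X + 1) ∨ IsTV (.mu A)

/-- Well-formed type expressions: every recursive type `μX.A` has `A` proper in `X`. -/
def WF : Ty → Prop
  | .var _ => True
  | .arrow A B => WF A ∧ WF B
  | .box A => WF A
  | .mu A => WF A ∧ Proper A 0

/-- `⊤ = μX.•X`. -/
def tyTop : Ty := .mu (.box (.var 0))

/-- `•ⁿ A`. -/
def boxN (n : ℕ) (A : Ty) : Ty := Ty.box^[n] A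

/-- The equivalences `≅` (`s = false`) and `≃` (`s = true`) on type expressions. -/
inductive TyEq : Bool → Ty → Ty → Prop
  | refl (s : Bool) (A : Ty) : TyEq s A A
  | symm {s : Bool} {A B : Ty} : TyEq s A B → TyEq s B A
  | trans {s : Bool} {A B C : Ty} : TyEq s A B → TyEq s B C → TyEq s A C
  | boxCongr {s : Bool} {A B : Ty} : TyEq s A B → TyEq s (.box A) (.box B)
  | arrowCongr {s : Bool} {A B C D : Ty} :
      TyEq s A C → TyEq s B D → TyEq s (.arrow A B) (.arrow C D)
  | arrowTop (s : Bool) (A : Ty) : TyEq s (.arrow A tyTop) tyTop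
  | fix (s : Bool) (A : Ty) : TyEq s (.mu A) (unfoldMu A)
  | uniq {s : Bool} {A C : Ty} : TyEq s A (openT C A) → Proper C 0 → TyEq s A (.mu C)
  | kl (A B : Ty) : TyEq true (.box (.arrow A B)) (.arrow (.box A) (.box B))

/-! ### Subtyping -/

/-- Subtyping assumptions: finite sets of pairs of type variables. -/
abbrev Assum := Finset (ℕ × ℕ)

/-- Well-formedness of a subtyping assumption: every type variable occurs at most once. -/
def AssumOK (γ : Assum) : Prop :=
  (∀ p ∈ γ, (p : ℕ × ℕ).1 ≠ p.2) ∧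
    ∀ p ∈ γ, ∀ q ∈ γ, p ≠ q →
      (p : ℕ × ℕ).1 ≠ (q : ℕ × ℕ).1 ∧ p.1 ≠ q.2 ∧ p.2 ≠ q.1 ∧ p.2 ≠ q.2

/-- `X` occurs in the subtyping assumption `γ`. -/
def AssumVar (γ : Assum) (X : ℕ) : Prop :=
  ∃ p ∈ γ, (p : ℕ × ℕ).1 = X ∨ (p : ℕ × ℕ).2 = X

/-- Derivability of subtyping judgments `γ ⊢ A ⪯ B`. -/
inductive Sub : Assum → Ty → Ty → Prop
  | assump {γ : Assum} {X Y : ℕ} : AssumOK γ → (X, Y) ∈ γ → Sub γ (.var X) (.var Y)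
  | top {γ : Assum} (A : Ty) : AssumOK γ → Sub γ A tyTop
  | refl {γ : Assum} {A B : Ty} : AssumOK γ → TyEq true A B → Sub γ A B
  | trans {γ₁ γ₂ : Assum} {A B C : Ty} :
      Sub γ₁ A B → Sub γ₂ B C → AssumOK (γ₁ ∪ γ₂) → Sub (γ₁ ∪ γ₂) A C
  | boxMono {γ : Assum} {A B : Ty} : Sub γ A B → Sub γ (.box A) (.box B)
  | arrowMono {γ₁ γ₂ : Assum} {A A' B B' : Ty} :
      Sub γ₁ A' A → Sub γ₂ B B' → AssumOK (γ₁ ∪ γ₂) →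
      Sub (γ₁ ∪ γ₂) (.arrow A B) (.arrow A' B')
  | muMono {γ : Assum} {X Y : ℕ} {A B : Ty} :
      AssumOK (insert (X, Y) γ) →
      Sub (insert (X, Y) γ) (openT A (.var X)) (openT B (.var Y)) →
      ¬ AssumVar γ X → ¬ AssumVar γ Y →
      ¬ freeInTy X (openT B (.var Y)) → ¬ freeInTy Y (openT A (.var X)) →
      Proper (openT A (.var X)) X → Proper (openT B (.var Y)) Y →
      Sub γ (.mu A) (.mu B)
  | approx {γ : Assum} (A : Ty) : AssumOK γ → Sub γ A (.box A)

/-! ### Untyped λ-terms (locally-nameless representation) -/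

inductive Tm : Type
  | bvar : ℕ → Tm
  | fvar : ℕ → Tm
  | lam : Tm → Tm
  | app : Tm → Tm → Tm
  deriving DecidableEq

def openTmAux (N : Tm) : ℕ → Tm → Tm
  | _, .fvar y => .fvar y
  | k, .bvar i => if i = k then N else .bvar i
  | k, .lam M => .lam (openTmAux N (k + 1) M)
  | k, .app M₁ M₂ => .app (openTmAux N k M₁) (openTmAux N k M₂)

/-- Instantiate the outermost bound variable of the body `M` by `N`. -/
def openTm (M N : Tm) : Tm := openTmAux N 0 M

/-- `substTm M x N` is the substitution `M[N/x]` for the free variable `x`. -/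
def substTm : Tm → ℕ → Tm → Tm
  | .bvar i, _, _ => .bvar i
  | .fvar y, x, N => if y = x then N else .fvar y
  | .lam M, x, N => .lam (substTm M x N)
  | .app M₁ M₂, x, N => .app (substTm M₁ x N) (substTm M₂ x N)

/-- Free occurrence of an individual variable in a λ-term. -/
def freeTm : ℕ → Tm → Prop
  | _, .bvar _ => False
  | x, .fvar y => y = x
  | x, .lam M => freeTm x M
  | x, .app M₁ M₂ => freeTm x M₁ ∨ freeTm x M₂

/-- One-step β-reduction. -/
inductive Step : Tm → Tm → Prop
  | beta (M N : Tm) : Step (.app (.lam M) N) (openTm M N)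
  | appL {M M' : Tm} (N : Tm) : Step M M' → Step (.app M N) (.app M' N)
  | appR (M : Tm) {N N' : Tm} : Step N N' → Step (.app M N) (.app M N')
  | lamCongr {M M' : Tm} : Step M M' → Step (.lam M) (.lam M')

/-- `→*β`, the reflexive-transitive closure of β-reduction. -/
def Steps : Tm → Tm → Prop := Relation.ReflTransGen Step

/-- β-convertibility `=β`. -/
inductive BetaEq : Tm → Tm → Prop
  | step {M N : Tm} : Step M N → BetaEq M N
  | refl (M : Tm) : BetaEq M M
  | symm {M N : Tm} : BetaEq M N → BetaEq N M
  | trans {M N K : Tm} : BetaEq M N → BetaEq N K → BetaEq M K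

/-! ### Typing -/

/-- Typing contexts: finite sets of (variable, type) pairs. -/
abbrev Ctx := Finset (ℕ × Ty)

/-- Well-formedness of a typing context (functionality). -/
def CtxOK (Γ : Ctx) : Prop :=
  ∀ p ∈ Γ, ∀ q ∈ Γ, (p : ℕ × Ty).1 = (q : ℕ × Ty).1 → p = q

/-- `•Γ`. -/
def boxCtx (Γ : Ctx) : Ctx := Γ.image fun p => (p.1, Ty.box p.2)

/-- All types in the context are well-formed type expressions. -/
def CtxWF (Γ : Ctx) : Prop := ∀ p ∈ Γ, WF (p : ℕ × Ty).2

/-- The typing system λA. -/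
inductive Typing : Ctx → Tm → Ty → Prop
  | var {Γ : Ctx} {x : ℕ} {A : Ty} : CtxOK Γ → (x, A) ∈ Γ → Typing Γ (.fvar x) A
  | shift {Γ : Ctx} {M : Tm} {A : Ty} : Typing (boxCtx Γ) M (.box A) → Typing Γ M A
  | top {Γ : Ctx} (M : Tm) : CtxOK Γ → Typing Γ M tyTop
  | sub {Γ : Ctx} {M : Tm} {A B : Ty} : Typing Γ M A → Sub ∅ A B → Typing Γ M B
  | lamI {Γ : Ctx} {x : ℕ} {A B : Ty} {M : Tm} :
      ¬ freeTm x M →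
      Typing (insert (x, A) Γ) (openTm M (.fvar x)) B →
      Typing Γ (.lam M) (.arrow A B)
  | appE {Γ₁ Γ₂ : Ctx} {M N : Tm} {A B : Ty} :
      Typing Γ₁ M (.arrow A B) → Typing Γ₂ N A → CtxOK (Γ₁ ∪ Γ₂) →
      Typing (Γ₁ ∪ Γ₂) (.app M N) B

/-! ### Frames, λ-algebras and the semantics of types -/

/-- The accessibility relation is conversely well-founded. -/
def ConverselyWF {W : Type*} (acc : W → W → Prop) : Prop :=
  WellFounded fun q p => acc p q

/-- Local linearity of the accessibility relation. -/
def LocallyLinear {W : Type*} (acc : W → W → Prop) : Prop :=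
  ∀ p q, acc p q → ∃ r, Relation.ReflTransGen acc p r ∧ acc r q ∧
    ∀ s, acc r s → Relation.ReflTransGen acc q s

/-- Hereditary type environments. -/
def Hereditary {W : Type*} {V : Type*} (acc : W → W → Prop) (η : ℕ → W → Set V) : Prop :=
  ∀ X p q, acc p q → η X p ⊆ η X q

/-- Syntactical λ-algebras of the untyped λ-calculus. -/
structure LambdaAlgebra (V : Type*) where
  nonempty : Nonempty V
  ap : V → V → V
  den : Tm → (ℕ → V) → V
  den_fvar : ∀ x ρ, den (.fvar x) ρ = ρ x
  den_app : ∀ M N ρ, den (.app M N) ρ = ap (den M ρ) (den N ρ)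
  den_lam : ∀ M x ρ v, ¬ freeTm x M →
    ap (den (.lam M) ρ) v = den (openTm M (.fvar x)) (Function.update ρ x v)
  den_ext : ∀ M ρ ρ', (∀ x, freeTm x M → ρ x = ρ' x) → den M ρ = den M ρ'
  den_beta : ∀ M N ρ, BetaEq M N → den M ρ = den N ρ

/-- The interpretation `I(A)^η_p` of type expressions over a frame, packaged together with
its defining (recursion) equations. -/
structure Interp (W : Type*) (acc : W → W → Prop) (V : Type*) (ap : V → V → V) where
  I : Ty → (ℕ → W → Set V) → W → Set V
  I_tv : ∀ A η p, WF A → IsTV A → I A η p = Set.univ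
  I_var : ∀ X η p, I (.var X) η p = η X p
  I_box : ∀ A η p, WF A → ¬ IsTV (Ty.box A) →
    I (.box A) η p = {u | ∀ q, acc p q → u ∈ I A η q}
  I_arrow : ∀ A B η p, WF A → WF B → ¬ IsTV (Ty.arrow A B) →
    I (.arrow A B) η p =
      {u | ∀ q, Relation.ReflTransGen acc p q → ∀ v ∈ I A η q, ap u v ∈ I B η q}
  I_mu : ∀ A η p, WF (Ty.mu A) → ¬ IsTV (Ty.mu A) →
    I (.mu A) η p = I (unfoldMu A) η p

/-! ### Tail finiteness and related notions -/

/-- The sets `TF^V`. -/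
inductive TFmem : Set ℕ → Ty → Prop
  | var {V : Set ℕ} {X : ℕ} : X ∉ V → TFmem V (.var X)
  | box {V : Set ℕ} {A : Ty} : TFmem V A → TFmem V (.box A)
  | arrow {V : Set ℕ} (A : Ty) {B : Ty} : TFmem V B → TFmem V (.arrow A B)
  | mu {V : Set ℕ} {A : Ty} : WF (.mu A) → TFmem ({0} ∪ (Nat.succ '' V)) A → TFmem V (.mu A)

/-- Shapes `•^{m₀}(B₁ → •^{m₁}(B₂ → ⋯ → •^{m_{n-1}}(Bₙ → •^{mₙ} X)⋯))`. -/
inductive TFShape : Ty → Prop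
  | var (X : ℕ) : TFShape (.var X)
  | box {A : Ty} : TFShape A → TFShape (.box A)
  | arrow (A : Ty) {B : Ty} : TFShape B → TFShape (.arrow A B)

/-- Tail finite type expressions. -/
def TailFinite (A : Ty) : Prop := ∃ C, TFShape C ∧ WF C ∧ TyEq false A C

-- Effectively occurring type variables, positively (`petv`) and negatively (`netv`).
mutual
  def petv : Ty → Finset ℕ
    | .var X => {X}
    | .box A => if tvAux (.box A) 0 0 then ∅ else petv A
    | .arrow A B => if tvAux (.arrow A B) 0 0 then ∅ else netv A ∪ petv B
    | .mu A =>
        if tvAux (.mu A) 0 0 then ∅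
        else if 0 ∈ netv A then ((petv A ∪ netv A).erase 0).image (· - 1)
        else ((petv A).erase 0).image (· - 1)
  def netv : Ty → Finset ℕ
    | .var _ => ∅
    | .box A => if tvAux (.box A) 0 0 then ∅ else netv A
    | .arrow A B => if tvAux (.arrow A B) 0 0 then ∅ else petv A ∪ netv B
    | .mu A =>
        if tvAux (.mu A) 0 0 then ∅
        else if 0 ∈ netv A then ((netv A ∪ petv A).erase 0).image (· - 1)
        else ((netv A).erase 0).image (· - 1)
end

/-- Positively finite type expressions. -/
def PosFin (A : Ty) : Prop :=
  ∀ (s : Bool) (B C : Ty) (X : ℕ), WF B → WF C →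
    TyEq s A (substFree B X C) → X ∈ petv B → X ∉ netv B → TailFinite C

/-- Negatively finite type expressions. -/
def NegFin (A : Ty) : Prop :=
  ∀ (s : Bool) (B C : Ty) (X : ℕ), WF B → WF C →
    TyEq s A (substFree B X C) → X ∈ netv B → X ∉ petv B → TailFinite C

/-! ### Head normal forms, maximality, normal forms -/

/-- `y N₁ … Nₙ` with every argument satisfying `P`. -/
inductive SpineArgs (P : Tm → Prop) : Tm → Prop
  | fvar (x : ℕ) : SpineArgs P (.fvar x)
  | bvar (i : ℕ) : SpineArgs P (.bvar i)
  | app {M N : Tm} : SpineArgs P M → P N → SpineArgs P (.app M N)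

/-- Head normal forms `λx₁…λxₘ. y N₁ … Nₙ` whose arguments satisfy `P`. -/
inductive HNFP (P : Tm → Prop) : Tm → Prop
  | spine {M : Tm} : SpineArgs P M → HNFP P M
  | lam {M : Tm} : HNFP P M → HNFP P (.lam M)

/-- Head normal forms. -/
def HNF : Tm → Prop := HNFP fun _ => True

/-- Maximality at a given depth. -/
def MaxAt : ℕ → Tm → Prop
  | 0, _ => True
  | n + 1, M => ∃ M', Steps M M' ∧ HNFP (MaxAt n) M'

/-- Maximal λ-terms: the Böhm tree contains no `⊥`. -/
def Maximal (M : Tm) : Prop := ∀ n, MaxAt n M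

/-- β-normal forms. -/
def NormalForm (M : Tm) : Prop := ∀ N, ¬ Step M N

/-- Type expressions without any occurrence of the modal operator `•`. -/
def NoBox : Ty → Prop
  | .var _ => True
  | .arrow A B => NoBox A ∧ NoBox B
  | .box _ => False
  | .mu A => NoBox A

/-! ### The modal logic LAμ and its Kripke semantics -/

/-- The logic LAμ (formulae are type expressions). -/
inductive LAmu : Finset Ty → Ty → Prop
  | assump {Γ : Finset Ty} {A : Ty} : LAmu (insert A Γ) A
  | nec {Γ₁ : Finset Ty} (Γ₂ : Finset Ty) {A : Ty} :
      LAmu Γ₁ A → LAmu (Γ₁.image Ty.box ∪ Γ₂) (.box A)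
  | four {Γ : Finset Ty} {A : Ty} : LAmu Γ (.box A) → LAmu Γ (.box (.box A))
  | impI {Γ : Finset Ty} {A B : Ty} : LAmu (insert A Γ) B → LAmu Γ (.arrow A B)
  | impE {Γ₁ Γ₂ : Finset Ty} {A B : Ty} :
      LAmu Γ₁ (.arrow A B) → LAmu Γ₂ A → LAmu (Γ₁ ∪ Γ₂) B
  | fold {Γ : Finset Ty} {A : Ty} : LAmu Γ (unfoldMu A) → LAmu Γ (.mu A)
  | unfold {Γ : Finset Ty} {A : Ty} : LAmu Γ (.mu A) → LAmu Γ (unfoldMu A)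
  | lrule {Γ : Finset Ty} {A B : Ty} :
      LAmu Γ (.arrow (.box A) (.box B)) → LAmu Γ (.box (.arrow A B))
  | approx {Γ : Finset Ty} {A : Ty} : LAmu Γ A → LAmu Γ (.box A)

/-- The Kripke satisfaction relation over an LA-frame `(W, tri, R)` under a valuation `ξ`,
packaged with its defining (recursion) equations. -/
structure SatFun {W : Type*} (tri R : W → W → Prop) (ξ : ℕ → W → Prop) where
  sat : Ty → W → Prop
  sat_tv : ∀ A p, WF A → IsTV A → sat A p
  sat_var : ∀ X p, sat (.var X) p ↔ ξ X p
  sat_box : ∀ A p, WF A → ¬ IsTV (Ty.box A) →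
    (sat (.box A) p ↔ ∀ q, tri p q → sat A q)
  sat_arrow : ∀ A B p, WF A → WF B → ¬ IsTV (Ty.arrow A B) →
    (sat (.arrow A B) p ↔ ∀ q, R p q → sat A q → sat B q)
  sat_mu : ∀ A p, WF (Ty.mu A) → ¬ IsTV (Ty.mu A) →
    (sat (.mu A) p ↔ sat (unfoldMu A) p)

/-! ### Auxiliary machinery for necessitation -/

/-- Renaming of free individual variables in a term. -/
def mapTm (π : ℕ → ℕ) : Tm → Tm
  | .bvar i => .bvar i
  | .fvar y => .fvar (π y)
  | .lam M => .lam (mapTm π M)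
  | .app M N => .app (mapTm π M) (mapTm π N)

/-- Finite set of free variables of a term. -/
def fvTm : Tm → Finset ℕ
  | .bvar _ => ∅
  | .fvar y => {y}
  | .lam M => fvTm M
  | .app M N => fvTm M ∪ fvTm N

lemma freeTm_iff (x : ℕ) (M : Tm) : freeTm x M ↔ x ∈ fvTm M := by
  induction M with
  | bvar i => simp [freeTm, fvTm]
  | fvar y => simp [freeTm, fvTm, eq_comm]
  | lam M ih => simpa [freeTm, fvTm] using ih
  | app M N ihM ihN => simp [freeTm, fvTm, ihM, ihN]

lemma mapTm_id (M : Tm) : mapTm id M = M := by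
  induction M <;> simp_all [mapTm]

lemma mapTm_openAux (π : ℕ → ℕ) (N : Tm) (k : ℕ) (M : Tm) :
    mapTm π (openTmAux N k M) = openTmAux (mapTm π N) k (mapTm π M) := by
  induction M generalizing k with
  | bvar i => by_cases h : i = k <;> simp [openTmAux, mapTm, h]
  | fvar y => simp [openTmAux, mapTm]
  | lam M ih => simp [openTmAux, mapTm, ih]
  | app M₁ M₂ ih₁ ih₂ => simp [openTmAux, mapTm, ih₁, ih₂]

lemma mapTm_congr {π π' : ℕ → ℕ} {M : Tm} (h : ∀ y ∈ fvTm M, π y = π' y) :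
    mapTm π M = mapTm π' M := by
  induction M with
  | bvar i => simp [mapTm]
  | fvar y => simp [mapTm, h y (by simp [fvTm])]
  | lam M ih => simp [mapTm]; exact ih fun y hy => h y (by simpa [fvTm] using hy)
  | app M₁ M₂ ih₁ ih₂ =>
      simp [mapTm]
      exact ⟨ih₁ fun y hy => h y (by simp [fvTm, hy]),
        ih₂ fun y hy => h y (by simp [fvTm, hy])⟩

lemma fvTm_mapTm (π : ℕ → ℕ) (M : Tm) : fvTm (mapTm π M) = (fvTm M).image π := by
  induction M with
  | bvar i => simp [mapTm, fvTm]
  | fvar y => simp [mapTm, fvTm]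
  | lam M ih => simp [mapTm, fvTm, ih]
  | app M₁ M₂ ih₁ ih₂ => simp [mapTm, fvTm, ih₁, ih₂, Finset.image_union]

/-- Renaming of individual variables in a context. -/
def mapCtx (π : ℕ → ℕ) (Γ : Ctx) : Ctx := Γ.image fun p => (π p.1, p.2)

lemma mapCtx_id (Γ : Ctx) : mapCtx id Γ = Γ := by
  simp [mapCtx]

lemma mapCtx_union (π : ℕ → ℕ) (Γ Δ : Ctx) :
    mapCtx π (Γ ∪ Δ) = mapCtx π Γ ∪ mapCtx π Δ := Finset.image_union _ _

lemma mapCtx_insert (π : ℕ → ℕ) (x : ℕ) (A : Ty) (Γ : Ctx) :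
    mapCtx π (insert (x, A) Γ) = insert (π x, A) (mapCtx π Γ) := Finset.image_insert _ _ _

lemma boxCtx_union (Γ Δ : Ctx) : boxCtx (Γ ∪ Δ) = boxCtx Γ ∪ boxCtx Δ :=
  Finset.image_union _ _

lemma boxCtx_insert (x : ℕ) (A : Ty) (Γ : Ctx) :
    boxCtx (insert (x, A) Γ) = insert (x, Ty.box A) (boxCtx Γ) := Finset.image_insert _ _ _

lemma mapCtx_boxCtx (π : ℕ → ℕ) (Γ : Ctx) :
    mapCtx π (boxCtx Γ) = boxCtx (mapCtx π Γ) := by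
  simp [mapCtx, boxCtx, Finset.image_image]; rfl

lemma CtxOK_subset {Γ Δ : Ctx} (h : CtxOK Γ) (hsub : Δ ⊆ Γ) : CtxOK Δ :=
  fun p hp q hq => h p (hsub hp) q (hsub hq)

lemma CtxOK_boxCtx {Γ : Ctx} (h : CtxOK Γ) : CtxOK (boxCtx Γ) := by
  intro p hp q hq hfst
  simp only [boxCtx, Finset.mem_image] at hp hq
  obtain ⟨a, ha, rfl⟩ := hp
  obtain ⟨b, hb, rfl⟩ := hq
  simp only at hfst
  have := h a ha b hb hfst
  subst this; rfl

lemma CtxOK_of_boxCtx {Γ : Ctx} (h : CtxOK (boxCtx Γ)) : CtxOK Γ := by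
  intro p hp q hq hfst
  have := h (p.1, Ty.box p.2) (Finset.mem_image_of_mem _ hp)
    (q.1, Ty.box q.2) (Finset.mem_image_of_mem _ hq) hfst
  simp only [Prod.mk.injEq, Ty.box.injEq] at this
  exact Prod.ext this.1 this.2

/-- Every derivable typing judgment has a well-formed context. -/
lemma typing_ctxOK {Γ : Ctx} {M : Tm} {A : Ty} (h : Typing Γ M A) : CtxOK Γ := by
  induction h with
  | var hΓ _ => exact hΓ
  | shift _ ih => exact CtxOK_of_boxCtx ih
  | top _ hΓ => exact hΓ
  | sub _ _ ih => exact ih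
  | lamI _ _ ih => exact CtxOK_subset ih (Finset.subset_insert _ _)
  | appE _ _ hok => exact hok

lemma assumOK_empty : AssumOK (∅ : Assum) := by
  constructor <;> intro p hp <;> simp at hp

lemma fresh_sup (S : Finset ℕ) : S.sup id + 1 ∉ S := by
  intro h
  have := Finset.le_sup (f := id) h
  simp only [id] at this
  omega

/-- Weakening combined with injective renaming of individual variables. -/
lemma typing_weaken_rename {Γ : Ctx} {M : Tm} {A : Ty} (h : Typing Γ M A) :
    ∀ π : ℕ → ℕ, Function.Injective π → ∀ Δ : Ctx,
      CtxOK (mapCtx π Γ ∪ Δ) → Typing (mapCtx π Γ ∪ Δ) (mapTm π M) A := by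
  induction h with
  | @var Γ x A hΓ hx =>
      intro π hπ Δ hok
      exact Typing.var hok (Finset.mem_union_left _
        (Finset.mem_image.mpr ⟨(x, A), hx, rfl⟩))
  | @shift Γ M A hT ih =>
      intro π hπ Δ hok
      apply Typing.shift
      have hok' : CtxOK (mapCtx π (boxCtx Γ) ∪ boxCtx Δ) := by
        rw [mapCtx_boxCtx, ← boxCtx_union]
        exact CtxOK_boxCtx hok
      have := ih π hπ (boxCtx Δ) hok'
      rwa [mapCtx_boxCtx, ← boxCtx_union] at this
  | top M hΓ =>
      intro π hπ Δ hok
      exact Typing.top _ hok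
  | sub _ hsub ih =>
      intro π hπ Δ hok
      exact (ih π hπ Δ hok).sub hsub
  | @lamI Γ x A B M hfree hT ih =>
      intro π hπ Δ hok
      have hOKins : CtxOK (insert (x, A) Γ) := typing_ctxOK hT
      set S : Finset ℕ := (mapCtx π Γ ∪ Δ).image Prod.fst ∪ (fvTm M).image π ∪ {π x}
        with hS
      set z : ℕ := S.sup id + 1 with hzdef
      have hz : z ∉ S := fresh_sup S
      have hzΓΔ : ∀ p ∈ mapCtx π Γ ∪ Δ, p.1 ≠ z := by
        intro p hp hpz
        apply hz
        rw [hS]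
        exact Finset.mem_union_left _ (Finset.mem_union_left _
          (Finset.mem_image.mpr ⟨p, hp, hpz⟩))
      have hzM : z ∉ (fvTm M).image π := fun hmem => hz (by
        rw [hS]
        exact Finset.mem_union_left _ (Finset.mem_union_right _ hmem))
      have hzx : z ≠ π x := fun hzx => hz (by
        rw [hS]
        exact Finset.mem_union_right _ (by simp [hzx]))
      set π' : ℕ → ℕ := (Equiv.swap (π x) z) ∘ π with hπ'def
      have hπ' : Function.Injective π' := (Equiv.swap (π x) z).injective.comp hπ
      have hπ'x : π' x = z := by simp [hπ'def]
      have hxM : x ∉ fvTm M := fun hmem => hfree ((freeTm_iff x M).mpr hmem)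
      have hagree : ∀ y ∈ fvTm M, π' y = π y := by
        intro y hy
        have hyx : y ≠ x := fun hyx => hxM (hyx ▸ hy)
        have h1 : π y ≠ π x := fun he => hyx (hπ he)
        have h2 : π y ≠ z := fun he => hzM (he ▸ Finset.mem_image_of_mem π hy)
        simp [hπ'def, Equiv.swap_apply_of_ne_of_ne h1 h2]
      -- key context equation
      have hctx : mapCtx π' (insert (x, A) Γ) ∪ (Δ ∪ mapCtx π Γ)
          = insert (z, A) (mapCtx π Γ ∪ Δ) := by
        apply Finset.Subset.antisymm
        · intro p hp
          rcases Finset.mem_union.mp hp with hp | hp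
          · rw [mapCtx_insert] at hp
            rcases Finset.mem_insert.mp hp with rfl | hp
            · rw [hπ'x]; exact Finset.mem_insert_self _ _
            · simp only [mapCtx, Finset.mem_image] at hp
              obtain ⟨⟨y, C⟩, hyC, rfl⟩ := hp
              by_cases hyx : y = x
              · subst hyx
                have : (y, C) = (y, A) := hOKins (y, C) (Finset.mem_insert_of_mem hyC)
                  (y, A) (Finset.mem_insert_self _ _) rfl
                simp only [Prod.mk.injEq] at this
                rw [this.2, hπ'x]
                exact Finset.mem_insert_self _ _
              · have h1 : π y ≠ π x := fun he => hyx (hπ he)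
                have h2 : π y ≠ z := by
                  intro he
                  exact hzΓΔ (π y, C) (Finset.mem_union_left _
                    (Finset.mem_image.mpr ⟨(y, C), hyC, rfl⟩)) he
                have : π' y = π y := by
                  simp [hπ'def, Equiv.swap_apply_of_ne_of_ne h1 h2]
                rw [this]
                exact Finset.mem_insert_of_mem (Finset.mem_union_left _
                  (Finset.mem_image.mpr ⟨(y, C), hyC, rfl⟩))
          · rcases Finset.mem_union.mp hp with hp | hp
            · exact Finset.mem_insert_of_mem (Finset.mem_union_right _ hp)
            · exact Finset.mem_insert_of_mem (Finset.mem_union_left _ hp)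
        · intro p hp
          rcases Finset.mem_insert.mp hp with rfl | hp
          · apply Finset.mem_union_left
            rw [mapCtx_insert, hπ'x]
            exact Finset.mem_insert_self _ _
          · rcases Finset.mem_union.mp hp with hp | hp
            · exact Finset.mem_union_right _ (Finset.mem_union_right _ hp)
            · exact Finset.mem_union_right _ (Finset.mem_union_left _ hp)
      have hokins : CtxOK (insert (z, A) (mapCtx π Γ ∪ Δ)) := by
        intro p hp q hq hfst
        rcases Finset.mem_insert.mp hp with rfl | hp <;>
          rcases Finset.mem_insert.mp hq with h' | hq
        · rw [h']
        · exact absurd hfst.symm (hzΓΔ q hq)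
        · subst h'; exact absurd hfst (hzΓΔ p hp)
        · exact hok p hp q hq hfst
      have hIH := ih π' hπ' (Δ ∪ mapCtx π Γ) (by rw [hctx]; exact hokins)
      rw [hctx] at hIH
      have hterm : mapTm π' (openTm M (.fvar x)) = openTm (mapTm π M) (.fvar z) := by
        rw [openTm, openTm, mapTm_openAux]
        simp only [mapTm, hπ'x]
        rw [mapTm_congr hagree]
      rw [hterm] at hIH
      have hzfree : ¬ freeTm z (mapTm π M) := by
        rw [freeTm_iff, fvTm_mapTm]
        exact hzM
      exact Typing.lamI hzfree hIH
  | @appE Γ₁ Γ₂ M N A B hM hN hok ih₁ ih₂ =>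
      intro π hπ Δ hok'
      have hu : mapCtx π (Γ₁ ∪ Γ₂) ∪ Δ = (mapCtx π Γ₁ ∪ Δ) ∪ (mapCtx π Γ₂ ∪ Δ) := by
        rw [mapCtx_union]
        ext p
        simp only [Finset.mem_union]
        tauto
      rw [hu] at hok' ⊢
      have h1 := ih₁ π hπ Δ (CtxOK_subset hok' Finset.subset_union_left)
      have h2 := ih₂ π hπ Δ (CtxOK_subset hok' Finset.subset_union_right)
      exact Typing.appE h1 h2 hok'

/-- The core of necessitation: `Γ ⊢ M : A` implies `•Γ ⊢ M : •A`. -/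
lemma typing_box {Γ : Ctx} {M : Tm} {A : Ty} (h : Typing Γ M A) :
    Typing (boxCtx Γ) M (.box A) := by
  induction h with
  | var hΓ hx =>
      exact Typing.var (CtxOK_boxCtx hΓ) (Finset.mem_image_of_mem _ hx)
  | shift _ ih => exact Typing.shift ih
  | top M hΓ =>
      exact (Typing.top M (CtxOK_boxCtx hΓ)).sub (Sub.approx tyTop assumOK_empty)
  | sub _ hsub ih => exact ih.sub (Sub.boxMono hsub)
  | @lamI Γ x A B M hfree _ ih =>
      rw [boxCtx_insert] at ih
      exact (Typing.lamI hfree ih).sub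
        (Sub.refl assumOK_empty (TyEq.kl A B).symm)
  | @appE Γ₁ Γ₂ M N A B _ _ hok ih₁ ih₂ =>
      have h1 : Typing (boxCtx Γ₁) M (.arrow (.box A) (.box B)) :=
        ih₁.sub (Sub.refl assumOK_empty (TyEq.kl A B))
      rw [boxCtx_union]
      exact Typing.appE h1 ih₂ (by rw [← boxCtx_union]; exact CtxOK_boxCtx hok)

/-- The **necessitation rule** is derivable in λA: if `•Γ₁ ∪ Γ₂` is a well-formed context
and `Γ₁ ⊢ M : A` is derivable, then so is `•Γ₁ ∪ Γ₂ ⊢ M : •A`. -/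
theorem statement18 (Γ₁ Γ₂ : Ctx) (M : Tm) (A : Ty)
    (hΓ₁ : CtxWF Γ₁) (hΓ₂ : CtxWF Γ₂) (hA : WF A)
    (hok : CtxOK (boxCtx Γ₁ ∪ Γ₂)) (hT : Typing Γ₁ M A) :
    Typing (boxCtx Γ₁ ∪ Γ₂) M (.box A) := by
  have h1 := typing_box hT
  have h2 := typing_weaken_rename h1 id Function.injective_id Γ₂
    (by rwa [mapCtx_id])
  rwa [mapCtx_id, mapTm_id] at h2

end LambdaA
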